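/- arXiv:math/0307223 — 2 statements merged into one kernel-verified Lean document; each statement's English description precedes it below -/
import Mathlib

section
/- Let $S = K[x_1,\ldots,x_n]$ and let $I \subset S$ be an $\mathfrak{m}$-primary stable monomial ideal. Let $d = \min\{\deg u : u \in G(I),\ m(u) = n\}$, where $G(I)$ is the minimal monomial generating set. If every minimal generator $u \in G(I)$ with $\deg u > d$ satisfies $m(u) = n$, then $x_n$ is a weak Lefschetz element on $S/I$. -/
open MvPolynomial

variable {K : Type*} [Field K] {n : ℕ}

/-- The total degree of an exponent vector. -/
def mdeg {n : ℕ} (m : Fin n →₀ ℕ) : ℕ := m.sum fun _ e => e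

/-- `I` is a monomial ideal: it contains every monomial of each of its elements. -/
def IsMonomialIdeal (I : Ideal (MvPolynomial (Fin n) K)) : Prop :=
  ∀ f ∈ I, ∀ m ∈ f.support, (monomial m (1 : K)) ∈ I

/-- `I` is stable: for every monomial `u ∈ I` with largest dividing variable `x_k`,
and every `i ≤ k`, the monomial `(x_i / x_k) * u` lies in `I`. -/
def IsStableIdeal (I : Ideal (MvPolynomial (Fin n) K)) : Prop :=
  ∀ m : Fin n →₀ ℕ, (monomial m (1 : K)) ∈ I →
    ∀ k i : Fin n, m k ≠ 0 → (∀ k', k < k' → m k' = 0) → i ≤ k →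
      (monomial (m + Finsupp.single i 1 - Finsupp.single k 1) (1 : K)) ∈ I

/-- `I` is strongly stable: for every monomial `u ∈ I`, every variable `x_k` dividing `u`
and every `i ≤ k`, the monomial `(x_i / x_k) * u` lies in `I`. -/
def IsStronglyStableIdeal (I : Ideal (MvPolynomial (Fin n) K)) : Prop :=
  ∀ m : Fin n →₀ ℕ, (monomial m (1 : K)) ∈ I →
    ∀ k i : Fin n, m k ≠ 0 → i ≤ k →
      (monomial (m + Finsupp.single i 1 - Finsupp.single k 1) (1 : K)) ∈ I

/-- `v <_lex u` for exponent vectors, lex order with `x_1 > x_2 > ⋯ > x_n`. -/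
def lexLt {n : ℕ} (v u : Fin n →₀ ℕ) : Prop :=
  ∃ i : Fin n, (∀ j < i, v j = u j) ∧ v i < u i

/-- `I` is a lexsegment ideal. -/
def IsLexsegmentIdeal (I : Ideal (MvPolynomial (Fin n) K)) : Prop :=
  IsMonomialIdeal I ∧
    ∀ u v : Fin n →₀ ℕ, (monomial u (1 : K)) ∈ I → mdeg v = mdeg u → lexLt u v →
      (monomial v (1 : K)) ∈ I

/-- The degree `j` piece of `S/I`, as the image of the degree `j` homogeneous polynomials. -/
noncomputable def Qpiece (I : Ideal (MvPolynomial (Fin n) K)) (j : ℕ) :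
    Submodule K (MvPolynomial (Fin n) K ⧸ I) :=
  (homogeneousSubmodule (Fin n) K j).map (Ideal.Quotient.mkₐ K I).toLinearMap

/-- Multiplication by `g` maps `(S/I)_j` injectively (to `(S/I)_{j'}`). -/
def QInj (I : Ideal (MvPolynomial (Fin n) K)) (g : MvPolynomial (Fin n) K)
    (j _j' : ℕ) : Prop :=
  ∀ f₁ ∈ Qpiece I j, ∀ f₂ ∈ Qpiece I j,
    Ideal.Quotient.mk I g * f₁ = Ideal.Quotient.mk I g * f₂ → f₁ = f₂

/-- Multiplication by `g` maps `(S/I)_j` onto `(S/I)_{j'}`. -/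
def QSurj (I : Ideal (MvPolynomial (Fin n) K)) (g : MvPolynomial (Fin n) K)
    (j j' : ℕ) : Prop :=
  ∀ h ∈ Qpiece I j', ∃ f ∈ Qpiece I j, Ideal.Quotient.mk I g * f = h

/-- Multiplication by `g` from `(S/I)_j` to `(S/I)_{j'}` has maximal rank. -/
def MulMaxRank (I : Ideal (MvPolynomial (Fin n) K)) (g : MvPolynomial (Fin n) K)
    (j j' : ℕ) : Prop :=
  QInj I g j j' ∨ QSurj I g j j'

/-- The monomial with exponent vector `m` is a minimal generator of the monomial
ideal `I`. -/
def IsMinGen (I : Ideal (MvPolynomial (Fin n) K)) (m : Fin n →₀ ℕ) : Prop :=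
  monomial m (1 : K) ∈ I ∧
    ∀ i : Fin n, m i ≠ 0 → monomial (m - Finsupp.single i 1) (1 : K) ∉ I

/-!
The heart of the argument: for a stable ideal, if `v ∉ I` and `x_k` is the last variable dividing
`v` (or any later one), then `x_k v ∈ I` forces `x_k v` to be a minimal generator, since stability
moves any `x_k v / x_i ∈ I` back to `v`. A descending induction on the degree, started in degrees
where `I` contains everything, then shows that under the hypothesis every `x_n`-free monomial of
degree `≥ d` lies in `I`.

Now fix a degree `j`. If no monomial `w ∉ I` of degree `j` has `x_n w ∈ I`, multiplication by `x_n`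
is injective on `(S/I)_j`, because `I` is monomial. Otherwise a minimal generator dividing `x_n w`
involves `x_n`, so `d ≤ j + 1`; then every monomial of degree `j + 1` outside `I` is divisible by
`x_n` and multiplication by `x_n` is onto `(S/I)_{j+1}`.
-/

section MonomialMembership

variable {σ R : Type*} [CommSemiring R] {I : Ideal (MvPolynomial σ R)}

lemma monomial_mem_of_le {u v : σ →₀ ℕ} (hu : monomial u (1 : R) ∈ I) (huv : u ≤ v) :
    monomial v (1 : R) ∈ I := by
  rw [← tsub_add_cancel_of_le huv, ← one_mul (1 : R), ← monomial_mul]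
  exact I.mul_mem_left _ hu

lemma monomial_mem_of_one_mem {m : σ →₀ ℕ} (c : R) (hm : monomial m (1 : R) ∈ I) :
    monomial m c ∈ I := by
  rw [← mul_one c, ← C_mul_monomial]
  exact I.mul_mem_left _ hm

lemma mem_of_forall_monomial_mem {p : MvPolynomial σ R}
    (hp : ∀ m ∈ p.support, monomial m (1 : R) ∈ I) : p ∈ I := by
  rw [p.as_sum]
  exact I.sum_mem fun m hm => monomial_mem_of_one_mem _ (hp m hm)

end MonomialMembership

lemma mdeg_add (a b : Fin n →₀ ℕ) : mdeg (a + b) = mdeg a + mdeg b :=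
  map_add Finsupp.degree a b

lemma mdeg_single (i : Fin n) (k : ℕ) : mdeg (Finsupp.single i k) = k :=
  Finsupp.degree_single i k

lemma mdeg_mono {a b : Fin n →₀ ℕ} (h : a ≤ b) : mdeg a ≤ mdeg b := by
  rw [← tsub_add_cancel_of_le h, mdeg_add]
  exact Nat.le_add_left _ _

lemma mdeg_eq_zero_iff {m : Fin n →₀ ℕ} : mdeg m = 0 ↔ m = 0 :=
  Finsupp.degree_eq_zero_iff m

lemma MvPolynomial.IsHomogeneous.mdeg_of_mem_support {p : MvPolynomial (Fin n) K} {j : ℕ}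
    (hp : p.IsHomogeneous j) {m : Fin n →₀ ℕ} (hm : m ∈ p.support) : mdeg m = j := by
  change Finsupp.degree m = j
  rw [Finsupp.degree_eq_weight_one]
  exact hp (mem_support_iff.1 hm)

lemma exists_isMinGen_le {I : Ideal (MvPolynomial (Fin n) K)} {m : Fin n →₀ ℕ}
    (hm : monomial m (1 : K) ∈ I) : ∃ u, IsMinGen I u ∧ u ≤ m := by
  obtain ⟨u, ⟨hum, huI⟩, hmin⟩ := WellFounded.has_min wellFounded_lt
    {u : Fin n →₀ ℕ | u ≤ m ∧ monomial u (1 : K) ∈ I} ⟨m, le_rfl, hm⟩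
  refine ⟨u, ⟨huI, fun i hi hmem => hmin _ ⟨tsub_le_self.trans hum, hmem⟩ ?_⟩, hum⟩
  refine tsub_le_self.lt_of_ne fun h => hi ?_
  have := DFunLike.congr_fun h i
  simp only [Finsupp.coe_tsub, Pi.sub_apply, Finsupp.single_eq_same] at this
  omega

lemma exists_forall_le_mdeg_monomial_mem {I : Ideal (MvPolynomial (Fin n) K)}
    (hmon : IsMonomialIdeal I) [FiniteDimensional K (MvPolynomial (Fin n) K ⧸ I)] :
    ∃ N, ∀ m : Fin n →₀ ℕ, N ≤ mdeg m → monomial m (1 : K) ∈ I := by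
  classical
  set T : Set (Fin n →₀ ℕ) := {m | monomial m (1 : K) ∉ I}
  have hli :
      LinearIndependent K fun m : T => Ideal.Quotient.mkₐ K I (monomial m.1 (1 : K)) := by
    refine linearIndependent_iff'.2 fun s g hsum i hi => by_contra fun hgi => i.2 ?_
    set P : MvPolynomial (Fin n) K := ∑ m ∈ s, monomial m.1 (g m)
    have hPI : P ∈ I := by
      rw [← Ideal.Quotient.eq_zero_iff_mem, ← Ideal.Quotient.mkₐ_eq_mk K, map_sum, ← hsum]
      refine Finset.sum_congr rfl fun m _ => ?_
      rw [← map_smul, smul_monomial, smul_eq_mul, mul_one]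
    have hcoeff : coeff i.1 P = g i := by
      rw [coeff_sum, Finset.sum_eq_single i (fun m _ hmi => ?_) (absurd hi)]
      · simp [coeff_monomial]
      · simp [coeff_monomial, Subtype.coe_injective.ne hmi]
    exact hmon P hPI i.1 (mem_support_iff.2 (hcoeff ▸ hgi))
  have hfin : T.Finite := @Set.toFinite _ _ hli.finite
  refine ⟨hfin.toFinset.sup mdeg + 1, fun m hm => by_contra fun hmI => ?_⟩
  have := Finset.le_sup (f := mdeg) (hfin.mem_toFinset.2 hmI)
  omega

lemma IsStableIdeal.isMinGen_add_single {I : Ideal (MvPolynomial (Fin n) K)}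
    (hst : IsStableIdeal I) {v : Fin n →₀ ℕ} {k : Fin n} (hk : ∀ i ∈ v.support, i ≤ k)
    (hv : monomial v (1 : K) ∉ I) (hvk : monomial (v + Finsupp.single k 1) (1 : K) ∈ I) :
    IsMinGen I (v + Finsupp.single k 1) := by
  refine ⟨hvk, fun i hi hmem => hv ?_⟩
  rcases eq_or_ne i k with rfl | hik
  · simpa using hmem
  have hvi : v i ≠ 0 := by simpa [hik.symm] using hi
  have hmoved := hst _ hmem k i (by simp [hik.symm])
    (fun k' hkk' => ?_) (hk i (Finsupp.mem_support_iff.2 hvi))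
  · convert hmoved using 3
    ext j
    simp only [Finsupp.tsub_apply, Finsupp.add_apply, Finsupp.single_apply]
    split_ifs <;> subst_vars <;> omega
  · have hvk' : v k' = 0 := Finsupp.notMem_support_iff.1 fun h => (hk k' h).not_gt hkk'
    simp [Finsupp.single_apply, hkk'.ne, hvk']

lemma monomial_mem_of_apply_eq_zero {I : Ideal (MvPolynomial (Fin n) K)}
    (hst : IsStableIdeal I) {l : Fin n} {d N : ℕ}
    (hgen : ∀ m : Fin n →₀ ℕ, IsMinGen I m → d < mdeg m → m l ≠ 0)
    (hN : ∀ m : Fin n →₀ ℕ, N ≤ mdeg m → monomial m (1 : K) ∈ I)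
    {v : Fin n →₀ ℕ} (hvl : v l = 0) (hv0 : v ≠ 0) (hvd : d ≤ mdeg v) :
    monomial v (1 : K) ∈ I := by
  induction hNv : N - mdeg v generalizing v with
  | zero => exact hN v (by omega)
  | succ t ih =>
    by_contra hv
    have hsupp : v.support.Nonempty := Finsupp.support_nonempty_iff.2 hv0
    set k := v.support.max' hsupp
    have hk : v k ≠ 0 := Finsupp.mem_support_iff.1 (v.support.max'_mem hsupp)
    have hkl : k ≠ l := by rintro rfl; exact hk hvl
    have hdeg : mdeg (v + Finsupp.single k 1) = mdeg v + 1 := by rw [mdeg_add, mdeg_single]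
    have hvkl : (v + Finsupp.single k 1 : Fin n →₀ ℕ) l = 0 := by simp [hkl, hvl]
    have hvk := ih hvkl (by simp) (by omega) (by omega)
    exact hgen _ (hst.isMinGen_add_single (fun i => v.support.le_max' i) hv hvk) (by omega) hvkl

lemma exists_isMinGen_apply_ne_zero {I : Ideal (MvPolynomial (Fin n) K)} {w : Fin n →₀ ℕ}
    {l : Fin n} (hw : monomial w (1 : K) ∉ I)
    (hwl : monomial (w + Finsupp.single l 1) (1 : K) ∈ I) :
    ∃ u, IsMinGen I u ∧ u l ≠ 0 ∧ mdeg u ≤ mdeg w + 1 := by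
  obtain ⟨u, hu, hule⟩ := exists_isMinGen_le hwl
  refine ⟨u, hu, fun hul => hw (monomial_mem_of_le hu.1 fun i => ?_), ?_⟩
  · have := hule i
    rcases eq_or_ne i l with rfl | hil
    · simp [hul]
    · simpa [Finsupp.single_apply, hil.symm] using this
  · simpa [mdeg_add, mdeg_single] using mdeg_mono hule

lemma qInj_X_of_monomial {I : Ideal (MvPolynomial (Fin n) K)} (hmon : IsMonomialIdeal I) {l : Fin n}
    {j j' : ℕ} (h : ∀ m : Fin n →₀ ℕ, mdeg m = j →
      monomial (m + Finsupp.single l 1) (1 : K) ∈ I → monomial m (1 : K) ∈ I) :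
    QInj I (X l) j j' := by
  rintro _ ⟨p₁, hp₁, rfl⟩ _ ⟨p₂, hp₂, rfl⟩ heq
  simp only [AlgHom.toLinearMap_apply, Ideal.Quotient.mkₐ_eq_mk, ← map_mul] at heq ⊢
  rw [Ideal.Quotient.eq] at heq ⊢
  refine mem_of_forall_monomial_mem fun m hm => h m ((hp₁.sub hp₂).mdeg_of_mem_support hm) ?_
  rw [← mul_sub] at heq
  refine add_comm m _ ▸ hmon _ heq _ (mem_support_iff.2 ?_)
  rwa [coeff_X_mul, ← mem_support_iff]

lemma qSurj_X_of_monomial {I : Ideal (MvPolynomial (Fin n) K)} {l : Fin n} {j : ℕ}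
    (h : ∀ m : Fin n →₀ ℕ, mdeg m = j + 1 → monomial m (1 : K) ∉ I → m l ≠ 0) :
    QSurj I (X l) j (j + 1) := by
  rintro _ ⟨p, hp, rfl⟩
  show Ideal.Quotient.mk I p ∈ (Qpiece I j).map (LinearMap.mulLeft K (Ideal.Quotient.mk I (X l)))
  rw [p.as_sum, map_sum]
  refine Submodule.sum_mem _ fun m hm => ?_
  have hdeg := (show p.IsHomogeneous (j + 1) from hp).mdeg_of_mem_support hm
  by_cases hmI : monomial m (1 : K) ∈ I
  · rw [Ideal.Quotient.eq_zero_iff_mem.2 (monomial_mem_of_one_mem _ hmI)]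
    exact Submodule.zero_mem _
  have hlm : Finsupp.single l 1 ≤ m :=
    Finsupp.single_le_iff.2 (Nat.one_le_iff_ne_zero.2 (h m hdeg hmI))
  refine ⟨Ideal.Quotient.mk I (monomial (m - Finsupp.single l 1) (coeff m p)),
    ⟨_, isHomogeneous_monomial _ ?_, rfl⟩, ?_⟩
  · have := mdeg_add (m - Finsupp.single l 1) (Finsupp.single l 1)
    rw [tsub_add_cancel_of_le hlm, mdeg_single] at this
    change mdeg _ = j
    omega
  · rw [LinearMap.mulLeft_apply, ← map_mul, X, monomial_mul, one_mul,
      add_tsub_cancel_of_le hlm]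

/-- Let `I` be an `𝔪`-primary stable monomial ideal and `d` the least degree of a
minimal generator divisible by `x_n`. If every minimal generator of degree `> d` is
divisible by `x_n`, then `x_n` is a weak Lefschetz element on `S/I`. -/
theorem stmt_13 (hn : 1 ≤ n) (I : Ideal (MvPolynomial (Fin n) K))
    (hmon : IsMonomialIdeal I) (hst : IsStableIdeal I)
    (hfd : FiniteDimensional K (MvPolynomial (Fin n) K ⧸ I))
    (d : ℕ)
    (hd : IsLeast {j : ℕ | ∃ m : Fin n →₀ ℕ,
        IsMinGen I m ∧ mdeg m = j ∧ m ⟨n - 1, by omega⟩ ≠ 0} d)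
    (hgen : ∀ m : Fin n →₀ ℕ, IsMinGen I m → d < mdeg m → m ⟨n - 1, by omega⟩ ≠ 0) :
    ∀ j : ℕ, MulMaxRank I (X (⟨n - 1, by omega⟩ : Fin n)) j (j + 1) := by
  intro j
  obtain ⟨N, hN⟩ := exists_forall_le_mdeg_monomial_mem hmon
  by_cases hker : ∃ w : Fin n →₀ ℕ, mdeg w = j ∧ monomial w (1 : K) ∉ I ∧
      monomial (w + Finsupp.single ⟨n - 1, by omega⟩ 1) (1 : K) ∈ I
  · obtain ⟨w, rfl, hw, hwl⟩ := hker
    obtain ⟨u, hu, hul, hdeg⟩ := exists_isMinGen_apply_ne_zero hw hwl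
    have hd_le : d ≤ mdeg w + 1 := (hd.2 ⟨u, hu, rfl, hul⟩).trans hdeg
    refine Or.inr (qSurj_X_of_monomial fun m hm hmI hml => hmI ?_)
    refine monomial_mem_of_apply_eq_zero hst hgen hN hml (fun hm0 => ?_) (by omega)
    rw [mdeg_eq_zero_iff.2 hm0] at hm
    omega
  · push Not at hker
    exact Or.inl (qInj_X_of_monomial hmon fun m hm hml => by_contra fun hmI => hker m hm hmI hml)
end

section
/- Let $S = K[x_1,\ldots,x_n]$ and let $I \subset S$ be a lexsegment ideal with $I_j \ne 0$, and choose the lex-smallest monomial $u = x_{\alpha(1)}\cdots x_{\alpha(j)} \in I_j$ (with $\alpha(1) \le \cdots \le \alpha(j)$). Then $H(S/I, j) = \sum_{i=1}^{j} \binom{k(i)}{i}$ where $k(i) = n - \alpha(j+1-i) + i - 1$, and since $k(j) > k(j-1) > \cdots > k(1) \ge 0$, these are the $j$-th Macaulay coefficients of $H(S/I,j)$. -/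
open MvPolynomial

variable {K : Type*} [Field K] {n : ℕ}

/-! For a monomial ideal `I`, the residue classes of the degree-`j` monomials outside `I` form a
basis of `(S/I)_j`, and for a lexsegment ideal these are exactly the monomials lex-smaller than
`u`. Write `u = x_{α 0} u'`. A monomial `v <_lex u` of degree `j` either involves no variable
`x_q` with `q ≤ α 0`, which leaves `multichoose (n - 1 - α 0) j` choices, or is `x_{α 0} v'`
with `v' <_lex u'`. Induction on `j` turns this recursion into the sum of binomial coefficients.
-/

open Finset

theorem mdeg_eq_degree (m : Fin n →₀ ℕ) : mdeg m = m.degree := rfl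

theorem mem_finsuppAntidiag_univ {j : ℕ} {v : Fin n →₀ ℕ} :
    v ∈ (univ : Finset (Fin n)).finsuppAntidiag j ↔ v.degree = j := by
  simp [Finsupp.degree_eq_sum]

section HilbertFunction

variable {I : Ideal (MvPolynomial (Fin n) K)}

theorem linearIndependent_mk_monomial (hI : IsMonomialIdeal I) {B : Set (Fin n →₀ ℕ)}
    (hB : ∀ v ∈ B, monomial v (1 : K) ∉ I) :
    LinearIndependent K fun v : B =>
      Ideal.Quotient.mk I (monomial (v : Fin n →₀ ℕ) (1 : K)) := by
  have hmon : LinearIndependent K fun v : B => monomial (v : Fin n →₀ ℕ) (1 : K) :=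
    (basisMonomials (Fin n) K).linearIndependent.comp _ Subtype.val_injective
  refine hmon.map (f := (Ideal.Quotient.mkₐ K I).toLinearMap) (Submodule.disjoint_def.2 ?_)
  intro f hf hker
  rw [← Set.image_eq_range (fun v => monomial v (1 : K)) B] at hf
  have hsupp : ∀ m ∈ f.support, m ∈ B :=
    AddMonoidAlgebra.mem_supported.1 ((AddMonoidAlgebra.supported_eq_span_single K B).symm ▸ hf)
  have hfI : f ∈ I := Ideal.Quotient.eq_zero_iff_mem.1 hker
  by_contra hf0
  obtain ⟨m, hm⟩ := support_nonempty.2 hf0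
  exact hB m (hsupp m hm) (hI f hfI m hm)

theorem qpiece_eq_span (j : ℕ) :
    Qpiece I j = Submodule.span K ((fun v => Ideal.Quotient.mk I (monomial v (1 : K))) ''
      {v | v.degree = j ∧ monomial v (1 : K) ∉ I}) := by
  rw [Qpiece, homogeneousSubmodule_eq_finsupp_supported, AddMonoidAlgebra.supported_eq_span_single,
    ← Submodule.span_image, ← Set.image_comp]
  refine le_antisymm (Submodule.span_le.2 ?_)
    (Submodule.span_mono (Set.image_mono fun v hv => hv.1))
  rintro _ ⟨v, hv, rfl⟩
  by_cases hvI : monomial v (1 : K) ∈ I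
  · change Ideal.Quotient.mk I (monomial v (1 : K)) ∈ _
    rw [Ideal.Quotient.eq_zero_iff_mem.2 hvI]
    exact zero_mem _
  · exact Submodule.subset_span ⟨v, ⟨hv, hvI⟩, rfl⟩

open scoped Classical in
theorem finrank_qpiece_of_isMonomialIdeal (hI : IsMonomialIdeal I) (j : ℕ) :
    Module.finrank K (Qpiece I j) =
      #{v ∈ (univ : Finset (Fin n)).finsuppAntidiag j | monomial v (1 : K) ∉ I} := by
  set B : Finset (Fin n →₀ ℕ) := {v ∈ univ.finsuppAntidiag j | monomial v (1 : K) ∉ I}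
  have hB : {v | v.degree = j ∧ monomial v (1 : K) ∉ I} = (B : Set (Fin n →₀ ℕ)) := by
    ext v; simp [B, Finsupp.degree_eq_sum]
  rw [qpiece_eq_span, hB, Set.image_eq_range,
    finrank_span_eq_card (linearIndependent_mk_monomial hI fun v hv => (mem_filter.1 hv).2)]
  exact Fintype.card_coe B

end HilbertFunction

section LexCount

open Finsupp

theorem filter_toLex_lt_single_add {p : Fin n} {w : Fin n →₀ ℕ} (hw : ∀ q < p, w q = 0)
    (j : ℕ) :
    {v ∈ (univ : Finset (Fin n)).finsuppAntidiag (j + 1) | toLex v < toLex (single p 1 + w)} =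
      (Ioi p).finsuppAntidiag (j + 1) ∪
        {v ∈ (univ : Finset (Fin n)).finsuppAntidiag j | toLex v < toLex w}.map
          (addLeftEmbedding (single p 1)) := by
  ext v
  simp only [mem_union, mem_filter, mem_map, mem_finsuppAntidiag_univ, addLeftEmbedding_apply]
  constructor
  · rintro ⟨hdeg, hlt⟩
    obtain ⟨i, hagree, hi⟩ := Finsupp.Lex.lt_iff.1 hlt
    have hpi : p ≤ i := by
      by_contra! hip
      simp [hw i hip, hip.ne] at hi
    have hzero : ∀ q < p, v q = 0 := fun q hq => by
      simpa [hw q hq, single_apply, hq.ne] using hagree q (hq.trans_le hpi)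
    by_cases hvp : v p = 0
    · left
      have hsupp : v.support ⊆ Ioi p := fun q hq => mem_Ioi.2 <| lt_of_not_ge fun hqp =>
        mem_support_iff.1 hq ((eq_or_lt_of_le hqp).elim (· ▸ hvp) (hzero q))
      exact mem_finsuppAntidiag.2
        ⟨(sum_subset hsupp fun q _ hq => notMem_support_iff.1 hq).symm.trans hdeg, hsupp⟩
    · right
      have hle : single p 1 ≤ v := single_le_iff.2 (Nat.one_le_iff_ne_zero.2 hvp)
      refine ⟨v - single p 1, ⟨?_, ?_⟩, add_tsub_cancel_of_le hle⟩
      · have := congrArg degree (add_tsub_cancel_of_le hle)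
        rw [map_add, degree_single] at this
        omega
      · rw [← add_tsub_cancel_of_le hle, toLex_add, toLex_add] at hlt
        exact lt_of_add_lt_add_left hlt
  · rintro (hv | ⟨x, ⟨hxdeg, hxlt⟩, rfl⟩)
    · have hzero : ∀ q ≤ p, v q = 0 := fun q hq =>
        notMem_support_iff.1 fun h => not_lt.2 hq (mem_Ioi.1 ((mem_finsuppAntidiag.1 hv).2 h))
      refine ⟨mem_finsuppAntidiag_univ.1 (finsuppAntidiag_mono (subset_univ _) _ hv),
        Finsupp.Lex.lt_iff.2 ⟨p, fun q hq => ?_, ?_⟩⟩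
      · simp [hzero q hq.le, hw q hq, hq.ne]
      · simp [hzero p le_rfl]
    · refine ⟨by simp [hxdeg, add_comm], ?_⟩
      rw [toLex_add, toLex_add]
      exact add_lt_add_right hxlt _

theorem card_filter_toLex_lt_single_add {p : Fin n} {w : Fin n →₀ ℕ} (hw : ∀ q < p, w q = 0)
    (j : ℕ) :
    #{v ∈ (univ : Finset (Fin n)).finsuppAntidiag (j + 1) | toLex v < toLex (single p 1 + w)} =
      (n - 1 - p).multichoose (j + 1) +
        #{v ∈ (univ : Finset (Fin n)).finsuppAntidiag j | toLex v < toLex w} := by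
  rw [filter_toLex_lt_single_add hw, card_union_of_disjoint,
    card_finsuppAntidiag_nat_eq_multichoose, Fin.card_Ioi, card_map]
  refine disjoint_left.2 fun v hv hv' => ?_
  obtain ⟨x, -, rfl⟩ := mem_map.1 hv'
  have hp : p ∉ (single p 1 + x).support := fun h =>
    (lt_irrefl p) (mem_Ioi.1 ((mem_finsuppAntidiag.1 hv).2 h))
  simp at hp

theorem card_filter_toLex_lt_sum_single {j : ℕ} (α : Fin j → Fin n) (hα : Monotone α) :
    #{v ∈ (univ : Finset (Fin n)).finsuppAntidiag j |
        toLex v < toLex (∑ i, single (α i) 1)} =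
      ∑ i : Fin j, (n - 1 - α (Fin.rev i) + i).choose (i + 1) := by
  induction j with
  | zero => simp
  | succ j ih =>
    have hw : ∀ q < α 0, (∑ i : Fin j, single (α i.succ) 1) q = 0 := fun q hq => by
      rw [Finsupp.finsetSum_apply]
      exact sum_eq_zero fun i _ => single_eq_of_ne (hq.trans_le (hα (Fin.zero_le _))).ne
    rw [Fin.sum_univ_succ, card_filter_toLex_lt_single_add hw,
      ih (fun i => α i.succ) (hα.comp Fin.strictMono_succ.monotone), Fin.sum_univ_castSucc,
      add_comm, Nat.multichoose_eq]
    simp [Fin.rev_castSucc]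

end LexCount

open scoped Classical in
theorem filter_monomial_notMem_eq_filter_toLex_lt {I : Ideal (MvPolynomial (Fin n) K)}
    (hlex : IsLexsegmentIdeal I) {j : ℕ} {u : Fin n →₀ ℕ} (hdeg : mdeg u = j)
    (hu : monomial u (1 : K) ∈ I)
    (hmin : ∀ v : Fin n →₀ ℕ, mdeg v = j → lexLt v u → monomial v (1 : K) ∉ I) :
    {v ∈ (univ : Finset (Fin n)).finsuppAntidiag j | monomial v (1 : K) ∉ I} =
      {v ∈ (univ : Finset (Fin n)).finsuppAntidiag j | toLex v < toLex u} := by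
  refine filter_congr fun v hv => ?_
  have hvdeg : mdeg v = j := (mdeg_eq_degree v).trans (mem_finsuppAntidiag_univ.1 hv)
  refine ⟨fun hvI => lt_of_not_ge fun huv => hvI ?_, hmin v hvdeg⟩
  rcases huv.eq_or_lt with huv | huv
  · exact toLex_inj.1 huv ▸ hu
  · exact hlex.2 u v hu (hvdeg.trans hdeg.symm) huv

-- Indices are 0-based: `i : Fin j` stands for the paper's `i + 1`, and `α r` for `α(r + 1) - 1`.
theorem stmt_19_general (I : Ideal (MvPolynomial (Fin n) K))
    (hlex : IsLexsegmentIdeal I)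
    (j : ℕ)
    (α : Fin j → Fin n) (hα : Monotone α)
    (hu : monomial (∑ i : Fin j, Finsupp.single (α i) 1) (1 : K) ∈ I)
    (hmin : ∀ v : Fin n →₀ ℕ, mdeg v = j →
        lexLt v (∑ i : Fin j, Finsupp.single (α i) 1) → monomial v (1 : K) ∉ I) :
    Module.finrank K (Qpiece I j) =
        (∑ i : Fin j, Nat.choose (n - 1 - (α (Fin.rev i)).val + i.val) (i.val + 1)) ∧
      StrictMono (fun i : Fin j => n - 1 - (α (Fin.rev i)).val + i.val) := by
  have hdeg : mdeg (∑ i : Fin j, Finsupp.single (α i) 1) = j := by simp [mdeg_eq_degree]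
  refine ⟨?_, fun a b hab => ?_⟩
  · rw [finrank_qpiece_of_isMonomialIdeal hlex.1,
      filter_monomial_notMem_eq_filter_toLex_lt hlex hdeg hu hmin,
      card_filter_toLex_lt_sum_single α hα]
  · have : α (Fin.rev b) ≤ α (Fin.rev a) := hα (Fin.rev_le_rev.2 hab.le)
    dsimp only
    omega

/-- Let `I` be a lexsegment ideal, `j ≥ 1`, and let `u = x_{α(1)} ⋯ x_{α(j)}` (with
`α(1) ≤ ⋯ ≤ α(j)`) be the lex-smallest monomial of `I_j ≠ 0`. Then
`H(S/I, j) = ∑_{i=1}^j C(k(i), i)` where `k(i) = n - α(j+1-i) + i - 1`, and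
`k(j) > ⋯ > k(1) ≥ 0`, so these are the `j`-th Macaulay coefficients of `H(S/I,j)`.
(0-based encoding: `i : Fin j` encodes paper index `i+1`, `(α r).val = α(r+1) - 1`.) -/
theorem stmt_19 (hn : 1 ≤ n) (I : Ideal (MvPolynomial (Fin n) K))
    (hlex : IsLexsegmentIdeal I)
    (j : ℕ) (hj : 1 ≤ j)
    (α : Fin j → Fin n) (hα : Monotone α)
    (hu : monomial (∑ i : Fin j, Finsupp.single (α i) 1) (1 : K) ∈ I)
    (hmin : ∀ v : Fin n →₀ ℕ, mdeg v = j →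
        lexLt v (∑ i : Fin j, Finsupp.single (α i) 1) → monomial v (1 : K) ∉ I) :
    Module.finrank K (Qpiece I j) =
        (∑ i : Fin j, Nat.choose (n - 1 - (α (Fin.rev i)).val + i.val) (i.val + 1)) ∧
      StrictMono (fun i : Fin j => n - 1 - (α (Fin.rev i)).val + i.val) :=
  stmt_19_general I hlex j α hα hu hmin
end
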